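/- Let W be a von Neumann algebra, A ⊆ B ⊆ W unital subalgebras, and suppose B admits a Lebesgue decomposition with Lebesgue projection 𝔷_B ∈ B**. If 𝔷_B lies in A^⊥⊥ (identified with A** inside B**), then A admits a Lebesgue decomposition compatible with that of B; conversely, if A admits a Lebesgue decomposition compatible with that of B, then 𝔷_B ∈ A^⊥⊥. -/

import Mathlib

open NormedSpace ContinuousLinearMap Filter Topology

/-- `dmulL A φ a` is the functional `φa` with `(φa)(b) = φ(ab)`. -/
noncomputable def dmulL (A : Type*) [NormedRing A] [NormedAlgebra ℂ A] :
    StrongDual ℂ A →L[ℂ] A →L[ℂ] StrongDual ℂ A :=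
  ((compL ℂ A (A →L[ℂ] A) (StrongDual ℂ A)).flip (mul ℂ A)).comp (compL ℂ A A ℂ)

/-- `dmulL' A φ a` is the functional `aφ` with `(aφ)(b) = φ(ba)`. -/
noncomputable def dmulL' (A : Type*) [NormedRing A] [NormedAlgebra ℂ A] :
    StrongDual ℂ A →L[ℂ] A →L[ℂ] StrongDual ℂ A :=
  ((compL ℂ A (A →L[ℂ] A) (StrongDual ℂ A)).flip ((mul ℂ A).flip)).comp (compL ℂ A A ℂ)

/-- Left module action of the bidual on the dual: `(biSMulL Λ φ)(a) = Λ(φa)`. -/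
noncomputable def biSMulL {A : Type*} [NormedRing A] [NormedAlgebra ℂ A]
    (Λ : StrongDual ℂ (StrongDual ℂ A)) : StrongDual ℂ A →L[ℂ] StrongDual ℂ A :=
  (compL ℂ A (StrongDual ℂ A) ℂ Λ).comp (dmulL A)

/-- Right module action of the bidual on the dual: `(biSMulR φ Λ)(a) = Λ(aφ)`. -/
noncomputable def biSMulR {A : Type*} [NormedRing A] [NormedAlgebra ℂ A]
    (φ : StrongDual ℂ A) (Λ : StrongDual ℂ (StrongDual ℂ A)) : StrongDual ℂ A :=
  Λ.comp (dmulL' A φ)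

/-- The Arens product on the bidual: `(arens Λ Ξ)(φ) = Λ(Ξ·φ)`. -/
noncomputable def arens {A : Type*} [NormedRing A] [NormedAlgebra ℂ A]
    (Λ Ξ : StrongDual ℂ (StrongDual ℂ A)) : StrongDual ℂ (StrongDual ℂ A) :=
  Λ.comp (biSMulL Ξ)

/-- The canonical image of the unit of `A` in the bidual `A**`. -/
noncomputable def biOne (A : Type*) [NormedRing A] [NormedAlgebra ℂ A] :
    StrongDual ℂ (StrongDual ℂ A) :=
  NormedSpace.inclusionInDoubleDual ℂ A 1

/-- Weak-* continuity of a functional on a von Neumann algebra `W`, relative to the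
identification `e` of `W` with the dual of its predual `V`. -/
def WStarContRel {W : Type*} [NormedRing W] [NormedAlgebra ℂ W]
    {V : Type*} [NormedAddCommGroup V] [NormedSpace ℂ V]
    (e : W ≃ₗᵢ[ℂ] StrongDual ℂ V) (Φ : W → ℂ) : Prop :=
  Continuous fun v : WeakDual ℂ V => Φ (e.symm (WeakDual.toStrongDual v))

/-- The absolutely continuous functionals on a unital subalgebra `S` of the von Neumann
algebra `W`: those extending to weak-* continuous linear functionals on `W`. -/
def ACsub {W : Type*} [NormedRing W] [NormedAlgebra ℂ W]
    {V : Type*} [NormedAddCommGroup V] [NormedSpace ℂ V]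
    (e : W ≃ₗᵢ[ℂ] StrongDual ℂ V) (S : Subalgebra ℂ W) : Set (StrongDual ℂ ↥S) :=
  {φ | ∃ Φ : W →ₗ[ℂ] ℂ, WStarContRel e Φ ∧ ∀ a : ↥S, Φ (a : W) = φ a}

/-- The continuous inclusion between nested unital subalgebras. -/
noncomputable def subIncl {W : Type*} [NormedRing W] [NormedAlgebra ℂ W]
    {A B : Subalgebra ℂ W} (h : A ≤ B) : ↥A →L[ℂ] ↥B :=
  LinearMap.mkContinuous (Subalgebra.inclusion h).toLinearMap 1 (fun x => by
    rw [one_mul]; exact le_of_eq rfl)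

/-! If `z_B` annihilates `A^⊥`, it factors through the restriction map `B* → A*`, which is onto
by Hahn–Banach: `z_A(ψ|_A) = z_B(ψ)` defines `z_A ∈ A**`. Restriction then intertwines the
actions of `z_A` and `z_B`, and every `φ ∈ A*` is the restriction of some `ψ ∈ B*` with
`‖ψ‖ = ‖φ‖`, so idempotence, the range `AC_W(A) = AC_W(B)|_A` and the L-summand norm identity
pass from `z_B` to `z_A`. Conversely, compatibility gives `(z_B·ψ)|_A = 0` whenever `ψ|_A = 0`,
and evaluating at `1 ∈ A` yields `z_B(ψ) = 0`. -/

section BidualAction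

variable {A : Type*} [NormedRing A] [NormedAlgebra ℂ A]

lemma dmulL_apply (φ : StrongDual ℂ A) (a b : A) : dmulL A φ a b = φ (a * b) := rfl

lemma biSMulL_apply (Λ : StrongDual ℂ (StrongDual ℂ A)) (φ : StrongDual ℂ A) (a : A) :
    biSMulL Λ φ a = Λ (dmulL A φ a) := rfl

lemma biSMulL_apply_one (Λ : StrongDual ℂ (StrongDual ℂ A)) (φ : StrongDual ℂ A) :
    biSMulL Λ φ 1 = Λ φ := by
  rw [biSMulL_apply]
  congr 1
  ext b
  rw [dmulL_apply, one_mul]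

lemma biSMulL_biSMulL (Λ Ξ : StrongDual ℂ (StrongDual ℂ A)) (φ : StrongDual ℂ A) :
    biSMulL Λ (biSMulL Ξ φ) = biSMulL (arens Λ Ξ) φ := by
  ext a
  show Λ (dmulL A (biSMulL Ξ φ) a) = Λ (biSMulL Ξ (dmulL A φ a))
  congr 1
  ext b
  show Ξ (dmulL A φ (a * b)) = Ξ (dmulL A (dmulL A φ a) b)
  congr 1
  ext c
  simp only [dmulL_apply, mul_assoc]

end BidualAction

section Restriction

variable {W : Type*} [NormedRing W] [NormedAlgebra ℂ W] {A B : Subalgebra ℂ W} (h : A ≤ B)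

lemma subIncl_one : subIncl h 1 = 1 := rfl

lemma norm_comp_subIncl_le (ψ : StrongDual ℂ ↥B) : ‖ψ.comp (subIncl h)‖ ≤ ‖ψ‖ :=
  opNorm_le_bound _ (norm_nonneg ψ) fun a => ψ.le_opNorm (subIncl h a)

lemma dmulL_comp_subIncl (ψ : StrongDual ℂ ↥B) (a : ↥A) :
    dmulL ↥A (ψ.comp (subIncl h)) a = (dmulL ↥B ψ (subIncl h a)).comp (subIncl h) := rfl

lemma exists_comp_subIncl_eq (φ : StrongDual ℂ ↥A) :
    ∃ ψ : StrongDual ℂ ↥B, ψ.comp (subIncl h) = φ ∧ ‖ψ‖ ≤ ‖φ‖ := by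
  obtain ⟨Φ, hΦ, hΦnorm⟩ := exists_extension_norm_eq (Subalgebra.toSubmodule A) φ
  refine ⟨Φ.comp (Subalgebra.toSubmodule B).subtypeL, ext fun a => hΦ a, ?_⟩
  calc ‖Φ.comp (Subalgebra.toSubmodule B).subtypeL‖ ≤ ‖Φ‖ :=
        opNorm_le_bound _ (norm_nonneg Φ) fun b => Φ.le_opNorm b
    _ = ‖φ‖ := hΦnorm

lemma WStarContRel.continuous {V : Type*} [NormedAddCommGroup V] [NormedSpace ℂ V]
    {e : W ≃ₗᵢ[ℂ] StrongDual ℂ V} {Φ : W → ℂ} (hΦ : WStarContRel e Φ) : Continuous Φ := by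
  have h := hΦ.comp (NormedSpace.Dual.toWeakDual_continuous.comp e.continuous)
  convert h using 1
  funext w
  exact congrArg Φ (e.symm_apply_apply w).symm

lemma ACsub_eq_image_comp_subIncl {V : Type*} [NormedAddCommGroup V] [NormedSpace ℂ V]
    (e : W ≃ₗᵢ[ℂ] StrongDual ℂ V) :
    ACsub e A = (fun ψ : StrongDual ℂ ↥B => ψ.comp (subIncl h)) '' ACsub e B := by
  ext φ
  constructor
  · rintro ⟨Φ, hΦw, hΦ⟩
    let Φc : W →L[ℂ] ℂ := ⟨Φ, hΦw.continuous⟩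
    exact ⟨Φc.comp (Subalgebra.toSubmodule B).subtypeL, ⟨Φ, hΦw, fun b => rfl⟩,
      ext fun a => hΦ a⟩
  · rintro ⟨ψ, ⟨Φ, hΦw, hΦ⟩, rfl⟩
    exact ⟨Φ, hΦw, fun a => hΦ (subIncl h a)⟩

lemma exists_comp_subIncl_eq_bidual (zB : StrongDual ℂ (StrongDual ℂ ↥B))
    (hzB : ∀ ψ : StrongDual ℂ ↥B, (∀ a : ↥A, ψ (subIncl h a) = 0) → zB ψ = 0) :
    ∃ zA : StrongDual ℂ (StrongDual ℂ ↥A), ∀ ψ, zA (ψ.comp (subIncl h)) = zB ψ := by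
  have hzB_congr : ∀ ψ ψ' : StrongDual ℂ ↥B,
      ψ.comp (subIncl h) = ψ'.comp (subIncl h) → zB ψ = zB ψ' := fun ψ ψ' hψ =>
    sub_eq_zero.mp <| (map_sub zB ψ ψ').symm.trans <| hzB _ fun a => by
      simpa [sub_eq_zero] using congrArg (fun χ => χ a) hψ
  choose extend hextend hextend_norm using exists_comp_subIncl_eq h
  let zA : StrongDual ℂ ↥A →ₗ[ℂ] ℂ :=
    { toFun := fun φ => zB (extend φ)
      map_add' := fun φ φ' => by
        rw [← map_add]
        exact hzB_congr _ _ (by rw [add_comp, hextend, hextend, hextend])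
      map_smul' := fun c φ => by
        rw [RingHom.id_apply, ← map_smul]
        exact hzB_congr _ _ (by rw [smul_comp, hextend, hextend]) }
  -- without these shortcuts instance search does not find the norm on the biduals
  let _ : NormedSpace ℂ ↥A := inferInstance
  let _ : NormedSpace ℂ ↥B := inferInstance
  have hzA_bound : ∀ φ, ‖zA φ‖ ≤ ‖zB‖ * ‖φ‖ := fun φ =>
    (zB.le_opNorm _).trans (mul_le_mul_of_nonneg_left (hextend_norm φ) (norm_nonneg zB))
  refine ⟨zA.mkContinuous ‖zB‖ hzA_bound, fun ψ => ?_⟩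
  exact hzB_congr _ _ (hextend _)

end Restriction

section LebesgueProjectionRestriction

variable {W : Type*} [NormedRing W] [NormedAlgebra ℂ W] {A B : Subalgebra ℂ W} (h : A ≤ B)
  {zA : StrongDual ℂ (StrongDual ℂ ↥A)} {zB : StrongDual ℂ (StrongDual ℂ ↥B)}

lemma biSMulL_comp_subIncl (hzA : ∀ ψ : StrongDual ℂ ↥B, zA (ψ.comp (subIncl h)) = zB ψ)
    (ψ : StrongDual ℂ ↥B) :
    biSMulL zA (ψ.comp (subIncl h)) = (biSMulL zB ψ).comp (subIncl h) := by
  ext a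
  rw [biSMulL_apply, dmulL_comp_subIncl, hzA]
  rfl

lemma biSMulL_idem_of_comp_subIncl
    (hzA : ∀ ψ : StrongDual ℂ ↥B, zA (ψ.comp (subIncl h)) = zB ψ) (hidem : arens zB zB = zB)
    (φ : StrongDual ℂ ↥A) :
    biSMulL zA (biSMulL zA φ) = biSMulL zA φ := by
  obtain ⟨ψ, rfl, -⟩ := exists_comp_subIncl_eq h φ
  rw [biSMulL_comp_subIncl h hzA, biSMulL_comp_subIncl h hzA, biSMulL_biSMulL, hidem]

lemma range_biSMulL_of_comp_subIncl
    (hzA : ∀ ψ : StrongDual ℂ ↥B, zA (ψ.comp (subIncl h)) = zB ψ) :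
    Set.range (biSMulL zA) =
      (fun ψ : StrongDual ℂ ↥B => ψ.comp (subIncl h)) '' Set.range (biSMulL zB) := by
  ext φ
  constructor
  · rintro ⟨φ', rfl⟩
    obtain ⟨ψ, rfl, -⟩ := exists_comp_subIncl_eq h φ'
    exact ⟨biSMulL zB ψ, ⟨ψ, rfl⟩, (biSMulL_comp_subIncl h hzA ψ).symm⟩
  · rintro ⟨_, ⟨ψ, rfl⟩, rfl⟩
    exact ⟨ψ.comp (subIncl h), biSMulL_comp_subIncl h hzA ψ⟩

lemma norm_eq_biSMulL_add_of_comp_subIncl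
    (hzA : ∀ ψ : StrongDual ℂ ↥B, zA (ψ.comp (subIncl h)) = zB ψ)
    (hnorm : ∀ ψ : StrongDual ℂ ↥B, ‖ψ‖ = ‖biSMulL zB ψ‖ + ‖ψ - biSMulL zB ψ‖)
    (φ : StrongDual ℂ ↥A) : ‖φ‖ = ‖biSMulL zA φ‖ + ‖φ - biSMulL zA φ‖ := by
  refine le_antisymm (norm_le_norm_add_norm_sub' φ (biSMulL zA φ)) ?_
  obtain ⟨ψ, rfl, hψ⟩ := exists_comp_subIncl_eq h φ
  rw [biSMulL_comp_subIncl h hzA, ← sub_comp]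
  calc ‖(biSMulL zB ψ).comp (subIncl h)‖ + ‖(ψ - biSMulL zB ψ).comp (subIncl h)‖
      ≤ ‖biSMulL zB ψ‖ + ‖ψ - biSMulL zB ψ‖ :=
        add_le_add (norm_comp_subIncl_le h _) (norm_comp_subIncl_le h _)
    _ = ‖ψ‖ := (hnorm ψ).symm
    _ ≤ ‖ψ.comp (subIncl h)‖ := hψ

end LebesgueProjectionRestriction

theorem stmt7_general {W : Type*} [NormedRing W] [NormedAlgebra ℂ W]
    {V : Type*} [NormedAddCommGroup V] [NormedSpace ℂ V] (e : W ≃ₗᵢ[ℂ] StrongDual ℂ V)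
    {A B : Subalgebra ℂ W} (hAB : A ≤ B)
    (zB : StrongDual ℂ (StrongDual ℂ ↥B))
    -- `z_B` is the Lebesgue projection of `B`: a central projection implementing
    -- the Lebesgue decomposition of `B*`
    (hidem : arens zB zB = zB)
    (hrange : ACsub e B = Set.range (biSMulL zB))
    (hnorm : ∀ ψ : StrongDual ℂ ↥B, ‖ψ‖ = ‖biSMulL zB ψ‖ + ‖ψ - biSMulL zB ψ‖) :
    -- `z_B ∈ A^⊥⊥`
    ((∀ ψ : StrongDual ℂ ↥B, (∀ a : ↥A, ψ (subIncl hAB a) = 0) → zB ψ = 0) ↔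
      -- `A` admits a Lebesgue decomposition compatible with that of `B`
      ∃ LA : StrongDual ℂ ↥A →L[ℂ] StrongDual ℂ ↥A,
        (∀ φ, LA (LA φ) = LA φ) ∧
        Set.range LA = ACsub e A ∧
        (∀ φ : StrongDual ℂ ↥A, ‖φ‖ = ‖LA φ‖ + ‖φ - LA φ‖) ∧
        ∀ ψ : StrongDual ℂ ↥B,
          LA (ψ.comp (subIncl hAB)) = (biSMulL zB ψ).comp (subIncl hAB) ∧
          ψ.comp (subIncl hAB) - LA (ψ.comp (subIncl hAB))
            = (ψ - biSMulL zB ψ).comp (subIncl hAB)) := by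
  constructor
  · intro hzB
    obtain ⟨zA, hzA⟩ := exists_comp_subIncl_eq_bidual hAB zB hzB
    refine ⟨biSMulL zA, biSMulL_idem_of_comp_subIncl hAB hzA hidem, ?_,
      norm_eq_biSMulL_add_of_comp_subIncl hAB hzA hnorm, fun ψ => ?_⟩
    · rw [range_biSMulL_of_comp_subIncl hAB hzA, ← hrange, ACsub_eq_image_comp_subIncl hAB]
    · rw [biSMulL_comp_subIncl hAB hzA, sub_comp]
      exact ⟨rfl, rfl⟩
  · rintro ⟨LA, -, -, -, hcompat⟩ ψ hψ
    have hres : ψ.comp (subIncl hAB) = 0 := ext hψ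
    have hLA := (hcompat ψ).1
    rw [hres, map_zero] at hLA
    rw [← biSMulL_apply_one, ← subIncl_one hAB]
    exact (congrArg (fun χ => χ 1) hLA).symm

/-- given `A ⊆ B ⊆ W` unital subalgebras with `B` admitting a Lebesgue
decomposition with Lebesgue projection `z_B ∈ B**`, the algebra `A` admits a Lebesgue
decomposition compatible with that of `B` iff `z_B` lies in `A^⊥⊥ ⊆ B**`. -/
theorem stmt7 {W : Type*} [NormedRing W] [StarRing W] [CStarRing W]
    [NormedAlgebra ℂ W] [StarModule ℂ W] [CompleteSpace W]
    {V : Type*} [NormedAddCommGroup V] [NormedSpace ℂ V] (e : W ≃ₗᵢ[ℂ] StrongDual ℂ V)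
    {A B : Subalgebra ℂ W} (hAB : A ≤ B)
    (zB : StrongDual ℂ (StrongDual ℂ ↥B))
    -- `z_B` is the Lebesgue projection of `B`: a central projection implementing
    -- the Lebesgue decomposition of `B*`
    (hidem : arens zB zB = zB)
    (hcentral : ∀ Ξ : StrongDual ℂ (StrongDual ℂ ↥B), arens zB Ξ = arens Ξ zB)
    (hrange : ACsub e B = Set.range (biSMulL zB))
    (hnorm : ∀ ψ : StrongDual ℂ ↥B, ‖ψ‖ = ‖biSMulL zB ψ‖ + ‖ψ - biSMulL zB ψ‖) :
    -- `z_B ∈ A^⊥⊥`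
    ((∀ ψ : StrongDual ℂ ↥B, (∀ a : ↥A, ψ (subIncl hAB a) = 0) → zB ψ = 0) ↔
      -- `A` admits a Lebesgue decomposition compatible with that of `B`
      ∃ LA : StrongDual ℂ ↥A →L[ℂ] StrongDual ℂ ↥A,
        (∀ φ, LA (LA φ) = LA φ) ∧
        Set.range LA = ACsub e A ∧
        (∀ φ : StrongDual ℂ ↥A, ‖φ‖ = ‖LA φ‖ + ‖φ - LA φ‖) ∧
        ∀ ψ : StrongDual ℂ ↥B,
          LA (ψ.comp (subIncl hAB)) = (biSMulL zB ψ).comp (subIncl hAB) ∧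
          ψ.comp (subIncl hAB) - LA (ψ.comp (subIncl hAB))
            = (ψ - biSMulL zB ψ).comp (subIncl hAB)) :=
  stmt7_general e hAB zB hidem hrange hnorm
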